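/- arXiv:1602.07422 — 2 statements merged into one kernel-verified Lean document; each statement's English description precedes it below -/
import Mathlib

section
/- Let (x, z, y) be a vertex solution (extreme point) of the polytope P = LP_RRST(E_X, V_X, E_Y, V_Y, E_Z, L) such that x_e > 0 for every e ∈ E_X, y_e > 0 for every e ∈ E_Y, and z_e > 0 for every e ∈ E_Z. Then there exist nonempty laminar families L(x) ⊆ F(x) and L(y) ⊆ F(y) and subsets E(x,z) ⊆ E(x,z)* and E(z,y) ⊆ E(z,y)* such that: (i) |E_X| + |E_Z| + |E_Y| = |L(x)| + |E(x,z)| + |E(z,y)| + |L(y)| + 1; and (ii) the vectors in {χ_X(E_X(U)) : U ∈ L(x)} ∪ {χ_Y(E_Y(U)) : U ∈ L(y)} ∪ {−χ_X({e}) + χ_Z({e}) : e ∈ E(x,z)} ∪ {χ_Z({e}) − χ_Y({e}) : e ∈ E(z,y)} ∪ {χ_Z(E_Z)} are linearly independent. -/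
/-!
At a vertex, a direction `d` that keeps every tight constraint tight must vanish: strict
constraints survive small perturbations, so `(x, z, y) ± t • d` would both be feasible. On the
coordinates `E_X ⊔ E_Z ⊔ E_Y` this says that the tight rows span the whole space. The tight sets
of `x` are closed under uncrossing, and since `x > 0` no edge joins `A \ B` to `B \ A` for tight
crossing `A`, `B`, so `χ(E(A ∩ B)) + χ(E(A ∪ B)) = χ(E(A)) + χ(E(B))`; hence the rows of a
maximal laminar subfamily span those of all tight sets (likewise for `y`). Extending the rows of
`V_X`, `V_Y` and `∑ z = L` to a basis chosen among the remaining spanning rows gives the count.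
-/

open Finset

/-- The set `E(U)` of edges of `E` having both endpoints in `U`
(edges are given by an endpoint map `p`). -/
def edgesIn {V ε : Type*} [DecidableEq V] (p : ε → V × V)
    (E : Finset ε) (U : Finset V) : Finset ε :=
  E.filter fun e => (p e).1 ∈ U ∧ (p e).2 ∈ U

/-- The (multi)graph on vertex set `V` with edge set `E` (endpoints given by `p`)
is connected: every nonempty proper vertex subset is left by some edge. -/
def ConnectedOn {V ε : Type*} [Fintype V] [DecidableEq V]
    (p : ε → V × V) (E : Finset ε) : Prop :=
  ∀ U : Finset V, U.Nonempty → U ≠ Finset.univ →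
    ∃ e ∈ E, ((p e).1 ∈ U ∧ (p e).2 ∉ U) ∨ ((p e).1 ∉ U ∧ (p e).2 ∈ U)

/-- The characteristic vector of a finset of edges. -/
def chi {ε : Type*} [DecidableEq ε] (S : Finset ε) : ε → ℝ :=
  fun e => if e ∈ S then 1 else 0

/-- A family of sets is laminar if no two of its members are intersecting,
i.e. any two members are nested or disjoint. -/
def LaminarFamily {V : Type*} [DecidableEq V] (𝒜 : Finset (Finset V)) : Prop :=
  ∀ A ∈ 𝒜, ∀ B ∈ 𝒜, A ⊆ B ∨ B ⊆ A ∨ A ∩ B = ∅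

/-- The feasible region of the linear program `LP_RRST(E_X, V_X, E_Y, V_Y, E_Z, L)`,
viewed inside `ℝ^{E_X} × ℝ^{E_Z} × ℝ^{E_Y}` (coordinates outside the respective edge
sets are fixed to `0`). -/
def LP_RRST {V W ε : Type*} [Fintype V] [Fintype W] [DecidableEq V] [DecidableEq W]
    [DecidableEq ε]
    (pX : ε → V × V) (pY : ε → W × W) (EX EY EZ : Finset ε) (L : ℕ) :
    Set ((ε → ℝ) × (ε → ℝ) × (ε → ℝ)) :=
  {q | (∀ e, 0 ≤ q.1 e) ∧ (∀ e, 0 ≤ q.2.1 e) ∧ (∀ e, 0 ≤ q.2.2 e) ∧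
       (∀ e ∉ EX, q.1 e = 0) ∧ (∀ e ∉ EZ, q.2.1 e = 0) ∧ (∀ e ∉ EY, q.2.2 e = 0) ∧
       (∑ e ∈ EX, q.1 e = (Fintype.card V : ℝ) - 1) ∧
       (∀ U : Finset V, U.Nonempty → U ≠ Finset.univ →
         ∑ e ∈ edgesIn pX EX U, q.1 e ≤ (U.card : ℝ) - 1) ∧
       (∀ e ∈ EX ∩ EZ, q.2.1 e ≤ q.1 e) ∧
       (∑ e ∈ EZ, q.2.1 e = (L : ℝ)) ∧
       (∀ e ∈ EY ∩ EZ, q.2.1 e ≤ q.2.2 e) ∧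
       (∑ e ∈ EY, q.2.2 e = (Fintype.card W : ℝ) - 1) ∧
       (∀ U : Finset W, U.Nonempty → U ≠ Finset.univ →
         ∑ e ∈ edgesIn pY EY U, q.2.2 e ≤ (U.card : ℝ) - 1)}


section Laminar

variable {V : Type*} [DecidableEq V]

/-- The paper calls such sets *intersecting*. -/
def Crossing (A B : Finset V) : Prop :=
  (A ∩ B).Nonempty ∧ (A \ B).Nonempty ∧ (B \ A).Nonempty

lemma not_crossing_iff {A B : Finset V} : ¬ Crossing A B ↔ A ⊆ B ∨ B ⊆ A ∨ A ∩ B = ∅ := by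
  simp only [Crossing, ← Finset.not_nonempty_iff_eq_empty, Finset.sdiff_nonempty]
  tauto

lemma crossing_of_crossing_inter {A B U : Finset V} (hAB : B ⊆ A ∨ A ⊆ B ∨ B ∩ A = ∅)
    (hAU : Crossing A U) (h : Crossing B (A ∩ U)) : Crossing B U ∧ B ≠ A := by
  simp only [Crossing, Finset.Nonempty, Finset.subset_iff, Finset.ext_iff, Finset.mem_inter,
    Finset.mem_sdiff, Finset.notMem_empty] at *
  grind

lemma crossing_of_crossing_union {A B U : Finset V} (hAB : B ⊆ A ∨ A ⊆ B ∨ B ∩ A = ∅)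
    (hAU : Crossing A U) (h : Crossing B (A ∪ U)) : Crossing B U ∧ B ≠ A := by
  simp only [Crossing, Finset.Nonempty, Finset.subset_iff, Finset.ext_iff, Finset.mem_inter,
    Finset.mem_union, Finset.mem_sdiff, Finset.notMem_empty] at *
  grind

lemma LaminarFamily.subset {ℒ ℒ' : Finset (Finset V)} (h : LaminarFamily ℒ) (h' : ℒ' ⊆ ℒ) :
    LaminarFamily ℒ' :=
  fun A hA B hB => h A (h' hA) B (h' hB)

lemma LaminarFamily.insert {ℒ : Finset (Finset V)} (h : LaminarFamily ℒ) {U : Finset V}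
    (hU : ∀ A ∈ ℒ, ¬ Crossing A U) : LaminarFamily (insert U ℒ) := by
  have hU' : ∀ A ∈ ℒ, A ⊆ U ∨ U ⊆ A ∨ A ∩ U = ∅ := fun A hA => not_crossing_iff.1 (hU A hA)
  intro A hA B hB
  rw [Finset.mem_insert] at hA hB
  rcases hA with rfl | hA <;> rcases hB with rfl | hB
  · exact Or.inl subset_rfl
  · rw [Finset.inter_comm]
    have := hU' B hB
    tauto
  · exact hU' A hA
  · exact h A hA B hB

lemma exists_maximal_laminar_subfamily (F : Finset (Finset V)) :
    ∃ ℒ ⊆ F, LaminarFamily ℒ ∧ ∀ U ∈ F, (∀ A ∈ ℒ, ¬ Crossing A U) → U ∈ ℒ := by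
  classical
  obtain ⟨ℒ, hℒ, hmax⟩ := Finset.exists_max_image {ℒ ∈ F.powerset | LaminarFamily ℒ}
    Finset.card ⟨∅, Finset.mem_filter.2 ⟨Finset.empty_mem_powerset F, by simp [LaminarFamily]⟩⟩
  rw [Finset.mem_filter, Finset.mem_powerset] at hℒ
  refine ⟨ℒ, hℒ.1, hℒ.2, fun U hUF hU => ?_⟩
  by_contra hUℒ
  have := hmax (insert U ℒ) (Finset.mem_filter.2
    ⟨Finset.mem_powerset.2 (Finset.insert_subset hUF hℒ.1), hℒ.2.insert hU⟩)
  rw [Finset.card_insert_of_notMem hUℒ] at this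
  omega

theorem mem_span_of_maximal_laminar {R M : Type*} [Ring R] [AddCommGroup M] [Module R M]
    {F ℒ : Finset (Finset V)} {v : Finset V → M}
    (hF : ∀ A ∈ F, ∀ B ∈ F, Crossing A B →
      A ∩ B ∈ F ∧ A ∪ B ∈ F ∧ v (A ∩ B) + v (A ∪ B) = v A + v B)
    (hℒF : ℒ ⊆ F) (hlam : LaminarFamily ℒ)
    (hmax : ∀ U ∈ F, (∀ A ∈ ℒ, ¬ Crossing A U) → U ∈ ℒ) {U : Finset V} (hU : U ∈ F) :
    v U ∈ Submodule.span R (v '' ℒ) := by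
  classical
  induction hn : #{A ∈ ℒ | Crossing A U} using Nat.strong_induction_on generalizing U with
  | _ n ih =>
  by_cases hcross : ∃ A ∈ ℒ, Crossing A U
  swap
  · push Not at hcross
    exact Submodule.subset_span ⟨U, hmax U hU hcross, rfl⟩
  obtain ⟨A, hAℒ, hAU⟩ := hcross
  obtain ⟨hIF, hUF, hmod⟩ := hF A (hℒF hAℒ) U hU hAU
  have fewer : ∀ C, (∀ B ∈ ℒ, Crossing B C → Crossing B U ∧ B ≠ A) →
      #{B ∈ ℒ | Crossing B C} < n := by
    intro C hC
    rw [← hn]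
    refine Finset.card_lt_card (Finset.ssubset_of_subset_of_ssubset ?_
      (Finset.erase_ssubset (Finset.mem_filter.2 ⟨hAℒ, hAU⟩)))
    intro B hB
    rw [Finset.mem_filter] at hB
    obtain ⟨h1, h2⟩ := hC B hB.1 hB.2
    exact Finset.mem_erase.2 ⟨h2, Finset.mem_filter.2 ⟨hB.1, h1⟩⟩
  have hI := ih _ (fewer _ fun B hB => crossing_of_crossing_inter (hlam B hB A hAℒ) hAU) hIF rfl
  have hU' := ih _ (fewer _ fun B hB => crossing_of_crossing_union (hlam B hB A hAℒ) hAU) hUF rfl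
  have hA : v A ∈ Submodule.span R (v '' ℒ) := Submodule.subset_span ⟨A, hAℒ, rfl⟩
  rw [show v U = v (A ∩ U) + v (A ∪ U) - v A by rw [hmod]; abel]
  exact sub_mem (add_mem hI hU') hA

end Laminar

@[simp] lemma chi_empty {ε : Type*} [DecidableEq ε] : chi (∅ : Finset ε) = 0 := by
  funext e
  simp [chi]

lemma sum_chi_mul {ε : Type*} [DecidableEq ε] {S E : Finset ε} (h : S ⊆ E) (f : ε → ℝ) :
    ∑ e ∈ E, chi S e * f e = ∑ e ∈ S, f e := by
  simp only [chi, ite_mul, one_mul, zero_mul, Finset.sum_ite_mem, Finset.inter_eq_right.2 h]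

section Uncrossing

variable {V ε : Type*} [DecidableEq V] (p : ε → V × V) (E : Finset ε)

def crossEdges (A B : Finset V) : Finset ε :=
  E.filter fun e => ((p e).1 ∈ A \ B ∧ (p e).2 ∈ B \ A) ∨ ((p e).1 ∈ B \ A ∧ (p e).2 ∈ A \ B)

lemma edgesIn_subset (U : Finset V) : edgesIn p E U ⊆ E := Finset.filter_subset _ E

lemma crossEdges_subset (A B : Finset V) : crossEdges p E A B ⊆ E := Finset.filter_subset _ E

lemma edgesIn_univ [Fintype V] : edgesIn p E Finset.univ = E := by
  simp [edgesIn]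

variable [DecidableEq ε]

lemma chi_edgesIn_inter_add_chi_edgesIn_union (A B : Finset V) :
    chi (edgesIn p E (A ∩ B)) + chi (edgesIn p E (A ∪ B)) =
      chi (edgesIn p E A) + chi (edgesIn p E B) + chi (crossEdges p E A B) := by
  funext e
  simp only [Pi.add_apply, chi, edgesIn, crossEdges, Finset.mem_filter, Finset.mem_inter,
    Finset.mem_union, Finset.mem_sdiff]
  split_ifs <;> grind

lemma sum_edgesIn_inter_add_sum_edgesIn_union (x : ε → ℝ) (A B : Finset V) :
    ∑ e ∈ edgesIn p E (A ∩ B), x e + ∑ e ∈ edgesIn p E (A ∪ B), x e =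
      ∑ e ∈ edgesIn p E A, x e + ∑ e ∈ edgesIn p E B, x e + ∑ e ∈ crossEdges p E A B, x e := by
  simp only [← sum_chi_mul (edgesIn_subset p E _) x, ← sum_chi_mul (crossEdges_subset p E A B) x,
    ← Finset.sum_add_distrib, ← add_mul]
  exact Finset.sum_congr rfl fun e _ => by
    rw [← Pi.add_apply (chi _), chi_edgesIn_inter_add_chi_edgesIn_union]
    rfl

end Uncrossing

section SpanningTree

variable {V ε : Type*} [Fintype V] [DecidableEq V] (p : ε → V × V) (E : Finset ε)

def SpanningTreePolytope : Set (ε → ℝ) :=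
  {x | (∀ e, 0 ≤ x e) ∧ (∀ e ∉ E, x e = 0) ∧ ∑ e ∈ E, x e = (Fintype.card V : ℝ) - 1 ∧
    ∀ U : Finset V, U.Nonempty → U ≠ Finset.univ → ∑ e ∈ edgesIn p E U, x e ≤ (U.card : ℝ) - 1}

def IsTightSet (x : ε → ℝ) (U : Finset V) : Prop :=
  ∑ e ∈ edgesIn p E U, x e = (U.card : ℝ) - 1

variable {p E} {x : ε → ℝ}

lemma isTightSet_univ (hx : x ∈ SpanningTreePolytope p E) : IsTightSet p E x Finset.univ := by
  rw [IsTightSet, edgesIn_univ, Finset.card_univ]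
  exact hx.2.2.1

lemma sum_edgesIn_le (hx : x ∈ SpanningTreePolytope p E) {U : Finset V} (hU : U.Nonempty) :
    ∑ e ∈ edgesIn p E U, x e ≤ (U.card : ℝ) - 1 := by
  by_cases hUu : U = Finset.univ
  · exact (hUu ▸ isTightSet_univ hx).le
  · exact hx.2.2.2 U hU hUu

variable [DecidableEq ε]

theorem IsTightSet.inter_union (hx : x ∈ SpanningTreePolytope p E) (hpos : ∀ e ∈ E, 0 < x e)
    {A B : Finset V} (hA : IsTightSet p E x A) (hB : IsTightSet p E x B)
    (hAB : (A ∩ B).Nonempty) :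
    IsTightSet p E x (A ∩ B) ∧ IsTightSet p E x (A ∪ B) ∧ crossEdges p E A B = ∅ := by
  have hmod := sum_edgesIn_inter_add_sum_edgesIn_union p E x A B
  have hcard : ((A ∩ B).card : ℝ) + (A ∪ B).card = A.card + B.card := by
    exact_mod_cast Finset.card_inter_add_card_union A B
  have hI := sum_edgesIn_le hx hAB
  have hU := sum_edgesIn_le hx (hAB.mono Finset.inter_subset_union)
  have hpos' : ∀ e ∈ crossEdges p E A B, 0 < x e :=
    fun e he => hpos e (crossEdges_subset p E A B he)
  have hC := Finset.sum_nonneg fun e he => (hpos' e he).le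
  unfold IsTightSet at hA hB
  refine ⟨by unfold IsTightSet; linarith, by unfold IsTightSet; linarith, ?_⟩
  by_contra hne
  have := Finset.sum_pos hpos' (Finset.nonempty_iff_ne_empty.2 hne)
  linarith

theorem exists_laminar_tight_span {M : Type*} [AddCommGroup M] [Module ℝ M]
    (hx : x ∈ SpanningTreePolytope p E) (hpos : ∀ e ∈ E, 0 < x e) (f : (ε → ℝ) →ₗ[ℝ] M) :
    ∃ ℒ : Finset (Finset V), (∀ U ∈ ℒ, IsTightSet p E x U) ∧ LaminarFamily ℒ ∧
      Finset.univ ∈ ℒ ∧ ∀ U, IsTightSet p E x U →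
        f (chi (edgesIn p E U)) ∈ Submodule.span ℝ ((fun U => f (chi (edgesIn p E U))) '' ℒ) := by
  classical
  obtain ⟨ℒ, hℒ, hlam, hmax⟩ :=
    exists_maximal_laminar_subfamily (Finset.univ.filter (IsTightSet p E x))
  have huniv : Finset.univ ∈ ℒ := hmax _ (by simpa using isTightSet_univ hx) fun A _ h =>
    h.2.1.ne_empty (Finset.sdiff_eq_empty_iff_subset.2 A.subset_univ)
  refine ⟨ℒ, fun U hU => (Finset.mem_filter.1 (hℒ hU)).2, hlam, huniv, fun U hU => ?_⟩
  refine mem_span_of_maximal_laminar (fun A hA B hB hAB => ?_) hℒ hlam hmax (by simpa using hU)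
  simp only [Finset.mem_filter, Finset.mem_univ, true_and] at hA hB ⊢
  obtain ⟨hI, hU, hC⟩ := hA.inter_union hx hpos hB hAB.1
  refine ⟨hI, hU, ?_⟩
  rw [← map_add, ← map_add, chi_edgesIn_inter_add_chi_edgesIn_union, hC, chi_empty, add_zero]

end SpanningTree

section Perturbation

open Filter Topology

lemma eventually_add_mul_le_add_mul {a b c d : ℝ} (h : a ≤ c) (hcd : a = c → b = d) :
    ∀ᶠ t in 𝓝 (0 : ℝ), a + t * b ≤ c + t * d := by
  rcases h.eq_or_lt with rfl | h
  · simp [hcd rfl]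
  · have hlt : ∀ᶠ t in 𝓝 (0 : ℝ), a + t * b < c + t * d :=
      (show ContinuousAt (fun t : ℝ => a + t * b) 0 by fun_prop).eventually_lt
        (show ContinuousAt (fun t : ℝ => c + t * d) 0 by fun_prop) (by simpa using h)
    exact hlt.mono fun _ => le_of_lt

lemma eventually_nonneg_add_smul {ε : Type*} {E : Finset ε} {x d : ε → ℝ}
    (hx : ∀ e, 0 ≤ x e) (hpos : ∀ e ∈ E, 0 < x e) (hxE : ∀ e ∉ E, x e = 0)
    (hdE : ∀ e ∉ E, d e = 0) :
    ∀ᶠ t in 𝓝 (0 : ℝ), (∀ e, 0 ≤ (x + t • d) e) ∧ ∀ e ∉ E, (x + t • d) e = 0 := by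
  have hE : ∀ᶠ t in 𝓝 (0 : ℝ), ∀ e ∈ E, 0 + t * 0 ≤ x e + t * d e :=
    (eventually_all_finset E).2 fun e he =>
      eventually_add_mul_le_add_mul (hx e) fun h => ((hpos e he).ne h).elim
  filter_upwards [hE] with t ht
  refine ⟨fun e => ?_, fun e he => by simp [hxE e he, hdE e he]⟩
  by_cases he : e ∈ E
  · simpa using ht e he
  · simp [hxE e he, hdE e he]

theorem eventually_add_smul_mem_spanningTreePolytope {V ε : Type*} [Fintype V] [DecidableEq V]
    {p : ε → V × V} {E : Finset ε} {x d : ε → ℝ} (hx : x ∈ SpanningTreePolytope p E)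
    (hpos : ∀ e ∈ E, 0 < x e) (hdE : ∀ e ∉ E, d e = 0)
    (htight : ∀ U, IsTightSet p E x U → ∑ e ∈ edgesIn p E U, d e = 0) :
    ∀ᶠ t in 𝓝 (0 : ℝ), x + t • d ∈ SpanningTreePolytope p E := by
  have hsum (t : ℝ) (S : Finset ε) :
      ∑ e ∈ S, (x + t • d) e = ∑ e ∈ S, x e + t * ∑ e ∈ S, d e := by
    simp only [Pi.add_apply, Pi.smul_apply, smul_eq_mul, Finset.sum_add_distrib, Finset.mul_sum]
  have hsub : ∀ᶠ t in 𝓝 (0 : ℝ), ∀ U : Finset V, U.Nonempty →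
      ∑ e ∈ edgesIn p E U, x e + t * ∑ e ∈ edgesIn p E U, d e ≤ (U.card : ℝ) - 1 + t * 0 := by
    refine eventually_all.2 fun U => eventually_imp_distrib_left.2 fun hU => ?_
    exact eventually_add_mul_le_add_mul (sum_edgesIn_le hx hU) (htight U)
  filter_upwards [eventually_nonneg_add_smul hx.1 hpos hx.2.1 hdE, hsub]
    with t ⟨hnn, hzero⟩ hsub
  refine ⟨hnn, hzero, ?_, fun U hU _ => by rw [hsum]; simpa using hsub U hU⟩
  have hd := htight _ (isTightSet_univ hx)
  rw [edgesIn_univ] at hd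
  rw [hsum, hd, mul_zero, add_zero, hx.2.2.1]

theorem eq_zero_of_mem_extremePoints {M : Type*} [AddCommGroup M] [Module ℝ M] {s : Set M}
    {q d : M} (hq : q ∈ s.extremePoints ℝ) (hd : ∀ᶠ t in 𝓝 (0 : ℝ), q + t • d ∈ s) : d = 0 := by
  have hneg : ∀ᶠ t in 𝓝 (0 : ℝ), q + (-t) • d ∈ s :=
    (continuous_neg.tendsto' (0 : ℝ) 0 neg_zero).eventually hd
  obtain ⟨t, ⟨h₁, h₂⟩, ht⟩ :=
    (((hd.and hneg).filter_mono nhdsWithin_le_nhds).and self_mem_nhdsWithin).exists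
      (f := 𝓝[>] (0 : ℝ))
  have hseg : q ∈ openSegment ℝ (q + t • d) (q + (-t) • d) :=
    ⟨1 / 2, 1 / 2, by norm_num, by norm_num, by norm_num, by module⟩
  simpa [ht.ne'] using hq.2 h₁ h₂ hseg

end Perturbation

abbrev Triple (ε : Type*) := (ε → ℝ) × (ε → ℝ) × (ε → ℝ)

section LP

open Filter Topology

variable {V W ε : Type*} [Fintype V] [Fintype W] [DecidableEq V] [DecidableEq W] [DecidableEq ε]
  {pX : ε → V × V} {pY : ε → W × W} {EX EY EZ : Finset ε} {L : ℕ}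

lemma mem_LP_RRST_iff {q : Triple ε} : q ∈ LP_RRST pX pY EX EY EZ L ↔
    q.1 ∈ SpanningTreePolytope pX EX ∧ q.2.2 ∈ SpanningTreePolytope pY EY ∧
    ((∀ e, 0 ≤ q.2.1 e) ∧ ∀ e ∉ EZ, q.2.1 e = 0) ∧ ∑ e ∈ EZ, q.2.1 e = L ∧
    (∀ e ∈ EX ∩ EZ, q.2.1 e ≤ q.1 e) ∧ ∀ e ∈ EY ∩ EZ, q.2.1 e ≤ q.2.2 e := by
  simp only [LP_RRST, SpanningTreePolytope, Set.mem_ofPred_eq]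
  tauto

theorem eventually_add_smul_mem_LP_RRST {x z y : ε → ℝ}
    (hq : (x, z, y) ∈ LP_RRST pX pY EX EY EZ L)
    (hx : ∀ e ∈ EX, 0 < x e) (hy : ∀ e ∈ EY, 0 < y e) (hz : ∀ e ∈ EZ, 0 < z e) {d : Triple ε}
    (hdX : ∀ e ∉ EX, d.1 e = 0) (hdZ : ∀ e ∉ EZ, d.2.1 e = 0) (hdY : ∀ e ∉ EY, d.2.2 e = 0)
    (htX : ∀ U, IsTightSet pX EX x U → ∑ e ∈ edgesIn pX EX U, d.1 e = 0)
    (htY : ∀ U, IsTightSet pY EY y U → ∑ e ∈ edgesIn pY EY U, d.2.2 e = 0)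
    (hZ : ∑ e ∈ EZ, d.2.1 e = 0)
    (htXZ : ∀ e ∈ EX ∩ EZ, z e = x e → d.2.1 e = d.1 e)
    (htYZ : ∀ e ∈ EY ∩ EZ, z e = y e → d.2.1 e = d.2.2 e) :
    ∀ᶠ t in 𝓝 (0 : ℝ), (x, z, y) + t • d ∈ LP_RRST pX pY EX EY EZ L := by
  obtain ⟨hX, hY, ⟨hz0, hzE⟩, hzsum, hzx, hzy⟩ := mem_LP_RRST_iff.1 hq
  have coupling (S : Finset ε) (a b da db : ε → ℝ) (hab : ∀ e ∈ S, a e ≤ b e)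
      (h : ∀ e ∈ S, a e = b e → da e = db e) :
      ∀ᶠ t in 𝓝 (0 : ℝ), ∀ e ∈ S, a e + t * da e ≤ b e + t * db e :=
    (eventually_all_finset S).2 fun e he => eventually_add_mul_le_add_mul (hab e he) (h e he)
  filter_upwards [eventually_add_smul_mem_spanningTreePolytope hX hx hdX htX,
    eventually_add_smul_mem_spanningTreePolytope hY hy hdY htY,
    eventually_nonneg_add_smul hz0 hz hzE hdZ, coupling _ _ _ _ _ hzx htXZ,
    coupling _ _ _ _ _ hzy htYZ] with t h1 h2 h3 h4 h5
  refine mem_LP_RRST_iff.2 ⟨h1, h2, h3, ?_, h4, h5⟩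
  simp [Finset.sum_add_distrib, ← Finset.mul_sum, hzsum, hZ]

end LP

section Coordinates

variable {ε : Type*} (EX EZ EY : Finset ε)

/-- All rows of `LP_RRST` live on these coordinates; passing to a finite-dimensional inner
product space makes "orthogonal to every tight row" available. -/
def restrictEdges : Triple ε →ₗ[ℝ] EuclideanSpace ℝ (EX ⊕ EZ ⊕ EY) where
  toFun q := WithLp.toLp 2
    (Sum.elim (fun e => q.1 e) (Sum.elim (fun e => q.2.1 e) fun e => q.2.2 e))
  map_add' q q' := by ext (i | i | i) <;> rfl
  map_smul' c q := by ext (i | i | i) <;> rfl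

@[simp] lemma restrictEdges_apply_inl (q : Triple ε) (e : EX) :
    restrictEdges EX EZ EY q (Sum.inl e) = q.1 e := rfl

@[simp] lemma restrictEdges_apply_inr_inl (q : Triple ε) (e : EZ) :
    restrictEdges EX EZ EY q (Sum.inr (Sum.inl e)) = q.2.1 e := rfl

@[simp] lemma restrictEdges_apply_inr_inr (q : Triple ε) (e : EY) :
    restrictEdges EX EZ EY q (Sum.inr (Sum.inr e)) = q.2.2 e := rfl

lemma inner_restrictEdges (w d : Triple ε) :
    inner ℝ (restrictEdges EX EZ EY w) (restrictEdges EX EZ EY d) =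
      ∑ e ∈ EX, w.1 e * d.1 e + ∑ e ∈ EZ, w.2.1 e * d.2.1 e + ∑ e ∈ EY, w.2.2 e * d.2.2 e := by
  simp only [restrictEdges, LinearMap.coe_mk, AddHom.coe_mk, PiLp.inner_apply,
    Fintype.sum_sum_type, Sum.elim_inl, Sum.elim_inr, RCLike.inner_apply, conj_trivial, add_assoc]
  simp only [← Finset.sum_coe_sort EX, ← Finset.sum_coe_sort EZ, ← Finset.sum_coe_sort EY,
    mul_comm]

variable [DecidableEq ε]

def extendEdges (u : EuclideanSpace ℝ (EX ⊕ EZ ⊕ EY)) : Triple ε :=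
  (fun e => if h : e ∈ EX then u (Sum.inl ⟨e, h⟩) else 0,
   fun e => if h : e ∈ EZ then u (Sum.inr (Sum.inl ⟨e, h⟩)) else 0,
   fun e => if h : e ∈ EY then u (Sum.inr (Sum.inr ⟨e, h⟩)) else 0)

lemma restrictEdges_extendEdges (u : EuclideanSpace ℝ (EX ⊕ EZ ⊕ EY)) :
    restrictEdges EX EZ EY (extendEdges EX EZ EY u) = u := by
  ext (i | i | i) <;> simp [extendEdges]

end Coordinates

section Rows

variable {V W ε : Type*}

/-- The constraint rows of `LP_RRST`: `inl U` and `inr (inl U)` index the subtour rows of `x`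
and `y`, the two copies of `ε` the rows of `z_e ≤ x_e` and `z_e ≤ y_e`, and `Unit` the row of
`∑ z = L`. -/
def rowVec [DecidableEq V] [DecidableEq W] [DecidableEq ε] (pX : ε → V × V) (pY : ε → W × W)
    (EX EY EZ : Finset ε) : Finset V ⊕ Finset W ⊕ ε ⊕ ε ⊕ Unit → Triple ε :=
  Sum.elim (fun U => (chi (edgesIn pX EX U), 0, 0))
    (Sum.elim (fun U => (0, 0, chi (edgesIn pY EY U)))
      (Sum.elim (fun e => (-chi {e}, chi {e}, 0))
        (Sum.elim (fun e => (0, chi {e}, -chi {e})) fun _ => (0, chi EZ, 0))))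

def rowSet (A : Set (Finset V)) (B : Set (Finset W)) (C D : Set ε) :
    Set (Finset V ⊕ Finset W ⊕ ε ⊕ ε ⊕ Unit) :=
  {i | Sum.elim (· ∈ A) (Sum.elim (· ∈ B) (Sum.elim (· ∈ C) (Sum.elim (· ∈ D) fun _ => True))) i}

def rowIncl (A : Finset (Finset V)) (B : Finset (Finset W)) (C D : Finset ε) :
    A ⊕ B ⊕ C ⊕ D ⊕ Unit → Finset V ⊕ Finset W ⊕ ε ⊕ ε ⊕ Unit :=
  Sum.map Subtype.val (Sum.map Subtype.val (Sum.map Subtype.val (Sum.map Subtype.val id)))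

lemma rowIncl_injective (A : Finset (Finset V)) (B : Finset (Finset W)) (C D : Finset ε) :
    Function.Injective (rowIncl A B C D) :=
  Subtype.val_injective.sumMap <| Subtype.val_injective.sumMap <|
    Subtype.val_injective.sumMap <| Subtype.val_injective.sumMap Function.injective_id

lemma range_rowIncl (A : Finset (Finset V)) (B : Finset (Finset W)) (C D : Finset ε) :
    Set.range (rowIncl A B C D) = rowSet A B C D := by
  ext (U | U | e | e | u) <;> simp [rowIncl, rowSet]

lemma exists_rowSet_eq {A : Finset (Finset V)} {B : Finset (Finset W)} {C D : Finset ε}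
    {b : Set (Finset V ⊕ Finset W ⊕ ε ⊕ ε ⊕ Unit)} (hb : b ⊆ rowSet ↑A ↑B ↑C ↑D)
    (hu : Sum.inr (Sum.inr (Sum.inr (Sum.inr ()))) ∈ b) :
    ∃ A' ⊆ A, ∃ B' ⊆ B, ∃ C' ⊆ C, ∃ D' ⊆ D, rowSet ↑A' ↑B' ↑C' ↑D' = b := by
  classical
  refine ⟨A.filter fun U => Sum.inl U ∈ b, Finset.filter_subset _ _,
    B.filter fun U => Sum.inr (Sum.inl U) ∈ b, Finset.filter_subset _ _,
    C.filter fun e => Sum.inr (Sum.inr (Sum.inl e)) ∈ b, Finset.filter_subset _ _,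
    D.filter fun e => Sum.inr (Sum.inr (Sum.inr (Sum.inl e))) ∈ b, Finset.filter_subset _ _, ?_⟩
  ext (U | U | e | e | u) <;>
    simp only [rowSet, Set.mem_ofPred_eq, Sum.elim_inl, Sum.elim_inr, Finset.coe_filter]
  exacts [and_iff_right_of_imp (hb ·), and_iff_right_of_imp (hb ·), and_iff_right_of_imp (hb ·),
    and_iff_right_of_imp (hb ·), iff_of_true trivial hu]

end Rows

lemma notMem_span_of_map_ne_zero {M : Type*} [AddCommGroup M] [Module ℝ M] (φ : M →ₗ[ℝ] ℝ)
    {m : M} {S : Set M} (hm : φ m ≠ 0) (hS : ∀ n ∈ S, φ n = 0) : m ∉ Submodule.span ℝ S :=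
  fun h => hm (Submodule.span_le (p := LinearMap.ker φ) |>.2 hS h)

section Vertex

variable {V W ε : Type*} [Fintype V] [Fintype W] [DecidableEq V] [DecidableEq W] [DecidableEq ε]
  {pX : ε → V × V} {pY : ε → W × W} {EX EY EZ : Finset ε} {L : ℕ} {x z y : ε → ℝ}

theorem span_tight_rows_eq_top
    (hvert : (x, z, y) ∈ (LP_RRST pX pY EX EY EZ L).extremePoints ℝ)
    (hx : ∀ e ∈ EX, 0 < x e) (hy : ∀ e ∈ EY, 0 < y e) (hz : ∀ e ∈ EZ, 0 < z e) :
    Submodule.span ℝ (restrictEdges EX EZ EY ∘ rowVec pX pY EX EY EZ ''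
      rowSet {U | IsTightSet pX EX x U} {U | IsTightSet pY EY y U}
        ↑{e ∈ EX ∩ EZ | z e = x e} ↑{e ∈ EY ∩ EZ | z e = y e}) = ⊤ := by
  rw [← Submodule.orthogonal_eq_bot_iff, Submodule.eq_bot_iff]
  intro u hu
  have horth : ∀ i ∈ rowSet {U | IsTightSet pX EX x U} {U | IsTightSet pY EY y U}
      ↑{e ∈ EX ∩ EZ | z e = x e} ↑{e ∈ EY ∩ EZ | z e = y e},
      inner ℝ (restrictEdges EX EZ EY (rowVec pX pY EX EY EZ i))
        (restrictEdges EX EZ EY (extendEdges EX EZ EY u)) = 0 := fun i hi => by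
    rw [restrictEdges_extendEdges]
    exact Submodule.inner_right_of_mem_orthogonal (Submodule.subset_span
      (Set.mem_image_of_mem (restrictEdges EX EZ EY ∘ rowVec pX pY EX EY EZ) hi)) hu
  -- pairing with the tight rows says that `extendEdges u` keeps every tight constraint tight
  have hd : extendEdges EX EZ EY u = 0 := by
    refine eq_zero_of_mem_extremePoints hvert (eventually_add_smul_mem_LP_RRST hvert.1 hx hy hz
      (fun e he => dif_neg he) (fun e he => dif_neg he) (fun e he => dif_neg he)
      (fun U hU => ?_) (fun U hU => ?_) ?_ (fun e he hze => ?_) (fun e he hze => ?_))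
    · simpa [inner_restrictEdges, rowVec, sum_chi_mul (edgesIn_subset _ _ _)] using
        horth (Sum.inl U) hU
    · simpa [inner_restrictEdges, rowVec, sum_chi_mul (edgesIn_subset _ _ _)] using
        horth (Sum.inr (Sum.inl U)) hU
    · simpa [inner_restrictEdges, rowVec, sum_chi_mul (subset_refl EZ)] using
        horth (Sum.inr (Sum.inr (Sum.inr (Sum.inr ())))) trivial
    · refine Eq.symm ?_
      simpa [inner_restrictEdges, rowVec, sum_chi_mul, Finset.mem_inter.1 he, neg_add_eq_zero] using
        horth (Sum.inr (Sum.inr (Sum.inl e))) (Finset.mem_filter.2 ⟨he, hze⟩)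
    · simpa [inner_restrictEdges, rowVec, sum_chi_mul, Finset.mem_inter.1 he, add_neg_eq_zero] using
        horth (Sum.inr (Sum.inr (Sum.inr (Sum.inl e)))) (Finset.mem_filter.2 ⟨he, hze⟩)
  rw [← restrictEdges_extendEdges EX EZ EY u, hd, map_zero]

theorem exists_laminar_rows_span_eq_top
    (hvert : (x, z, y) ∈ (LP_RRST pX pY EX EY EZ L).extremePoints ℝ)
    (hx : ∀ e ∈ EX, 0 < x e) (hy : ∀ e ∈ EY, 0 < y e) (hz : ∀ e ∈ EZ, 0 < z e) :
    ∃ (ℒx : Finset (Finset V)) (ℒy : Finset (Finset W)),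
      (∀ U ∈ ℒx, IsTightSet pX EX x U) ∧ (∀ U ∈ ℒy, IsTightSet pY EY y U) ∧
      LaminarFamily ℒx ∧ LaminarFamily ℒy ∧ Finset.univ ∈ ℒx ∧ Finset.univ ∈ ℒy ∧
      Submodule.span ℝ (restrictEdges EX EZ EY ∘ rowVec pX pY EX EY EZ ''
        rowSet ↑ℒx ↑ℒy ↑{e ∈ EX ∩ EZ | z e = x e} ↑{e ∈ EY ∩ EZ | z e = y e}) = ⊤ := by
  obtain ⟨hX, hY, -⟩ := mem_LP_RRST_iff.1 hvert.1
  obtain ⟨ℒx, htx, hlx, hux, hspx⟩ := exists_laminar_tight_span hX hx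
    (restrictEdges EX EZ EY ∘ₗ LinearMap.inl ℝ _ _)
  obtain ⟨ℒy, hty, hly, huy, hspy⟩ := exists_laminar_tight_span hY hy
    (restrictEdges EX EZ EY ∘ₗ LinearMap.inr ℝ _ _ ∘ₗ LinearMap.inr ℝ _ _)
  refine ⟨ℒx, ℒy, htx, hty, hlx, hly, hux, huy, eq_top_iff.2 ?_⟩
  rw [← span_tight_rows_eq_top hvert hx hy hz, Submodule.span_le]
  rintro _ ⟨(U | U | e | e | u), hi, rfl⟩
  · refine Submodule.span_mono ?_ (hspx U hi)
    rintro _ ⟨U, hU, rfl⟩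
    exact ⟨Sum.inl U, hU, rfl⟩
  · refine Submodule.span_mono ?_ (hspy U hi)
    rintro _ ⟨U, hU, rfl⟩
    exact ⟨Sum.inr (Sum.inl U), hU, rfl⟩
  all_goals exact Submodule.subset_span ⟨_, hi, rfl⟩

lemma linearIndepOn_seed_rows (hEX : EX.Nonempty) (hEY : EY.Nonempty) (hEZ : EZ.Nonempty) :
    LinearIndepOn ℝ (restrictEdges EX EZ EY ∘ rowVec pX pY EX EY EZ)
      {Sum.inl Finset.univ, Sum.inr (Sum.inl Finset.univ),
        Sum.inr (Sum.inr (Sum.inr (Sum.inr ())))} := by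
  obtain ⟨a, ha⟩ := hEX
  obtain ⟨b, hb⟩ := hEY
  obtain ⟨c, hc⟩ := hEZ
  -- each seed row is nonzero on a coordinate where the seed rows after it vanish
  refine LinearIndepOn.insert (LinearIndepOn.insert (LinearIndepOn.singleton ?_) ?_) ?_
  · intro h
    have := congrArg (· (Sum.inr (Sum.inl ⟨c, hc⟩))) h
    simp [rowVec, chi, hc] at this
  · refine notMem_span_of_map_ne_zero
      (EuclideanSpace.proj (Sum.inr (Sum.inr ⟨b, hb⟩))).toLinearMap ?_ ?_
    · simp [rowVec, chi, edgesIn_univ, hb]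
    · simp [rowVec]
  · refine notMem_span_of_map_ne_zero (EuclideanSpace.proj (Sum.inl ⟨a, ha⟩)).toLinearMap ?_ ?_
    · simp [rowVec, chi, edgesIn_univ, ha]
    · simp [rowVec, or_imp, forall_and]

theorem exists_rows_basis {A : Finset (Finset V)} {B : Finset (Finset W)} {C D : Finset ε}
    (hspan : Submodule.span ℝ
      (restrictEdges EX EZ EY ∘ rowVec pX pY EX EY EZ '' rowSet ↑A ↑B ↑C ↑D) = ⊤)
    (hA : Finset.univ ∈ A) (hB : Finset.univ ∈ B)
    (hEX : EX.Nonempty) (hEY : EY.Nonempty) (hEZ : EZ.Nonempty) :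
    ∃ Lx ⊆ A, ∃ Ly ⊆ B, ∃ Exz ⊆ C, ∃ Ezy ⊆ D, Finset.univ ∈ Lx ∧ Finset.univ ∈ Ly ∧
      LinearIndependent ℝ
        (restrictEdges EX EZ EY ∘ rowVec pX pY EX EY EZ ∘ rowIncl Lx Ly Exz Ezy) ∧
      Submodule.span ℝ (Set.range
        (restrictEdges EX EZ EY ∘ rowVec pX pY EX EY EZ ∘ rowIncl Lx Ly Exz Ezy)) = ⊤ := by
  obtain ⟨b, hbt, hsb, hspanb, hli⟩ := exists_linearIndepOn_extension
    (linearIndepOn_seed_rows (pX := pX) (pY := pY) hEX hEY hEZ)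
    (t := rowSet (A : Set (Finset V)) (B : Set (Finset W)) (C : Set ε) (D : Set ε)) <| by
      rintro _ (rfl | rfl | rfl)
      exacts [hA, hB, trivial]
  obtain ⟨Lx, hLx, Ly, hLy, Exz, hExz, Ezy, hEzy, rfl⟩ := exists_rowSet_eq hbt (hsb (by simp))
  refine ⟨Lx, hLx, Ly, hLy, Exz, hExz, Ezy, hEzy,
    hsb (Set.mem_insert _ _), hsb (Set.mem_insert_of_mem _ (Set.mem_insert _ _)), ?_, ?_⟩
  · rw [← range_rowIncl] at hli
    exact (linearIndepOn_range_iff (rowIncl_injective Lx Ly Exz Ezy)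
      (restrictEdges EX EZ EY ∘ rowVec pX pY EX EY EZ)).1 hli
  · rw [← Function.comp_assoc, Set.range_comp, range_rowIncl, eq_top_iff, ← hspan,
      Submodule.span_le]
    exact hspanb

end Vertex

theorem vertex_characterization_LP_RRST_general {V W ε : Type*}
    [Fintype V] [Fintype W] [DecidableEq V] [DecidableEq W] [DecidableEq ε]
    (pX : ε → V × V) (pY : ε → W × W) (EX EY EZ : Finset ε) (L : ℕ)
    (hEXne : EX.Nonempty) (hEYne : EY.Nonempty) (hEZne : EZ.Nonempty)
    (x z y : ε → ℝ)
    (hvert : (x, z, y) ∈ Set.extremePoints ℝ (LP_RRST pX pY EX EY EZ L))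
    (hx : ∀ e ∈ EX, 0 < x e) (hy : ∀ e ∈ EY, 0 < y e) (hz : ∀ e ∈ EZ, 0 < z e) :
    ∃ (Lx : Finset (Finset V)) (Ly : Finset (Finset W)) (Exz Ezy : Finset ε),
      Lx.Nonempty ∧ Ly.Nonempty ∧ LaminarFamily Lx ∧ LaminarFamily Ly ∧
      (∀ U ∈ Lx, ∑ e ∈ edgesIn pX EX U, x e = (U.card : ℝ) - 1) ∧
      (∀ U ∈ Ly, ∑ e ∈ edgesIn pY EY U, y e = (U.card : ℝ) - 1) ∧
      Exz ⊆ EX ∩ EZ ∧ (∀ e ∈ Exz, z e = x e) ∧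
      Ezy ⊆ EY ∩ EZ ∧ (∀ e ∈ Ezy, z e = y e) ∧
      EX.card + EZ.card + EY.card = Lx.card + Exz.card + Ezy.card + Ly.card + 1 ∧
      LinearIndependent ℝ (Sum.elim
        (fun U : {U // U ∈ Lx} =>
          ((chi (edgesIn pX EX U.1), 0, 0) : (ε → ℝ) × (ε → ℝ) × (ε → ℝ)))
        (Sum.elim
          (fun U : {U // U ∈ Ly} =>
            ((0, 0, chi (edgesIn pY EY U.1)) : (ε → ℝ) × (ε → ℝ) × (ε → ℝ)))
          (Sum.elim
            (fun e : {e // e ∈ Exz} =>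
              ((-(chi {e.1}), chi {e.1}, 0) : (ε → ℝ) × (ε → ℝ) × (ε → ℝ)))
            (Sum.elim
              (fun e : {e // e ∈ Ezy} =>
                ((0, chi {e.1}, -(chi {e.1})) : (ε → ℝ) × (ε → ℝ) × (ε → ℝ)))
              (fun _ : Unit =>
                ((0, chi EZ, 0) : (ε → ℝ) × (ε → ℝ) × (ε → ℝ))))))) := by
  obtain ⟨ℒx, ℒy, htx, hty, hlx, hly, hux, huy, hspan⟩ :=
    exists_laminar_rows_span_eq_top hvert hx hy hz
  obtain ⟨Lx, hLx, Ly, hLy, Exz, hExz, Ezy, hEzy, hLxu, hLyu, hli, hspan'⟩ :=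
    exists_rows_basis hspan hux huy hEXne hEYne hEZne
  have hcard := Module.finrank_eq_card_basis (Module.Basis.mk hli hspan'.ge)
  simp only [finrank_euclideanSpace, Fintype.card_sum, Fintype.card_coe, Fintype.card_unit]
    at hcard
  have hExz' : ∀ e ∈ Exz, e ∈ EX ∩ EZ ∧ z e = x e := fun e he => Finset.mem_filter.1 (hExz he)
  have hEzy' : ∀ e ∈ Ezy, e ∈ EY ∩ EZ ∧ z e = y e := fun e he => Finset.mem_filter.1 (hEzy he)
  refine ⟨Lx, Ly, Exz, Ezy, ⟨_, hLxu⟩, ⟨_, hLyu⟩, hlx.subset hLx, hly.subset hLy,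
    fun U hU => htx U (hLx hU), fun U hU => hty U (hLy hU), fun e he => (hExz' e he).1,
    fun e he => (hExz' e he).2, fun e he => (hEzy' e he).1, fun e he => (hEzy' e he).2,
    by omega, ?_⟩
  convert hli.of_comp (restrictEdges EX EZ EY) using 1
  funext i
  rcases i with U | U | e | e | u <;> rfl

/-- A vertex solution `(x, z, y)` of `LP_RRST` with all coordinates on
`E_X`, `E_Y`, `E_Z` strictly positive admits nonempty laminar families
`L(x) ⊆ F(x)`, `L(y) ⊆ F(y)` of tight vertex sets and subsets
`E(x,z) ⊆ E(x,z)*`, `E(z,y) ⊆ E(z,y)*` of tight edges such that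
(i) `|E_X| + |E_Z| + |E_Y| = |L(x)| + |E(x,z)| + |E(z,y)| + |L(y)| + 1`, and
(ii) the corresponding vectors, together with `χ_Z(E_Z)`, are linearly independent. -/
theorem vertex_characterization_LP_RRST {V W ε : Type*}
    [Fintype V] [Fintype W] [DecidableEq V] [DecidableEq W] [DecidableEq ε]
    [Nonempty V] [Nonempty W]
    (pX : ε → V × V) (pY : ε → W × W) (EX EY EZ : Finset ε) (L : ℕ)
    (hconnX : ConnectedOn pX EX) (hconnY : ConnectedOn pY EY)
    (hEXne : EX.Nonempty) (hEYne : EY.Nonempty) (hEZne : EZ.Nonempty)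
    (hEZ : EZ ⊆ EX ∪ EY) (hL : L ≤ EZ.card)
    (x z y : ε → ℝ)
    (hvert : (x, z, y) ∈ Set.extremePoints ℝ (LP_RRST pX pY EX EY EZ L))
    (hx : ∀ e ∈ EX, 0 < x e) (hy : ∀ e ∈ EY, 0 < y e) (hz : ∀ e ∈ EZ, 0 < z e) :
    ∃ (Lx : Finset (Finset V)) (Ly : Finset (Finset W)) (Exz Ezy : Finset ε),
      Lx.Nonempty ∧ Ly.Nonempty ∧ LaminarFamily Lx ∧ LaminarFamily Ly ∧
      (∀ U ∈ Lx, ∑ e ∈ edgesIn pX EX U, x e = (U.card : ℝ) - 1) ∧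
      (∀ U ∈ Ly, ∑ e ∈ edgesIn pY EY U, y e = (U.card : ℝ) - 1) ∧
      Exz ⊆ EX ∩ EZ ∧ (∀ e ∈ Exz, z e = x e) ∧
      Ezy ⊆ EY ∩ EZ ∧ (∀ e ∈ Ezy, z e = y e) ∧
      EX.card + EZ.card + EY.card = Lx.card + Exz.card + Ezy.card + Ly.card + 1 ∧
      LinearIndependent ℝ (Sum.elim
        (fun U : {U // U ∈ Lx} =>
          ((chi (edgesIn pX EX U.1), 0, 0) : (ε → ℝ) × (ε → ℝ) × (ε → ℝ)))
        (Sum.elim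
          (fun U : {U // U ∈ Ly} =>
            ((0, 0, chi (edgesIn pY EY U.1)) : (ε → ℝ) × (ε → ℝ) × (ε → ℝ)))
          (Sum.elim
            (fun e : {e // e ∈ Exz} =>
              ((-(chi {e.1}), chi {e.1}, 0) : (ε → ℝ) × (ε → ℝ) × (ε → ℝ)))
            (Sum.elim
              (fun e : {e // e ∈ Ezy} =>
                ((0, chi {e.1}, -(chi {e.1})) : (ε → ℝ) × (ε → ℝ) × (ε → ℝ)))
              (fun _ : Unit =>
                ((0, chi EZ, 0) : (ε → ℝ) × (ε → ℝ) × (ε → ℝ))))))) :=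
  vertex_characterization_LP_RRST_general pX pY EX EY EZ L hEXne hEYne hEZne x z y hvert hx hy hz
end

section
/- Let (x, z, y) be a point of the polytope P = LP_RRST(E_X, V_X, E_Y, V_Y, E_Z, L) with L ≥ 1, and suppose there is an edge e' ∈ E_Z with x_{e'} = 1 and y_{e'} = 1. Then there exists z' ∈ ℝ^{E_Z} with z'_{e'} = 1 and Σ_{e∈E_Z \ {e'}} z'_e = L − 1 such that (x, z', y) also belongs to P. -/
open Finset

/-- If `(x, z, y)` is a point of `LP_RRST(E_X, V_X, E_Y, V_Y, E_Z, L)`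
with `L ≥ 1` and there is an edge `e' ∈ E_Z` with `x_{e'} = 1` and `y_{e'} = 1`, then
there is `z'` with `z'_{e'} = 1` and `∑_{e ∈ E_Z \ {e'}} z'_e = L - 1` such that
`(x, z', y)` also lies in the polytope. -/
theorem convert_z_to_integral_coordinate {V W ε : Type*}
    [Fintype V] [Fintype W] [DecidableEq V] [DecidableEq W] [DecidableEq ε]
    [Nonempty V] [Nonempty W]
    (pX : ε → V × V) (pY : ε → W × W) (EX EY EZ : Finset ε) (L : ℕ)
    (hconnX : ConnectedOn pX EX) (hconnY : ConnectedOn pY EY)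
    (hEZ : EZ ⊆ EX ∪ EY) (hL : L ≤ EZ.card) (hL1 : 1 ≤ L)
    (x z y : ε → ℝ)
    (hmem : (x, z, y) ∈ LP_RRST pX pY EX EY EZ L)
    (e' : ε) (he' : e' ∈ EZ) (hxe' : x e' = 1) (hye' : y e' = 1) :
    ∃ z' : ε → ℝ, z' e' = 1 ∧ (∑ e ∈ EZ.erase e', z' e = (L : ℝ) - 1) ∧
      (x, z', y) ∈ LP_RRST pX pY EX EY EZ L := by
  obtain ⟨hx0, hz0, hy0, hxE, hzE, hyE, hxsum, hxU, hzx, hzsum, hzy, hysum, hyU⟩ := hmem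
  have hze'1 : z e' ≤ 1 := by
    rcases Finset.mem_union.mp (hEZ he') with hX | hY
    · have := hzx e' (Finset.mem_inter.mpr ⟨hX, he'⟩); simpa [hxe'] using this
    · have := hzy e' (Finset.mem_inter.mpr ⟨hY, he'⟩); simpa [hye'] using this
  set d : ℝ := (L : ℝ) - z e' with hd_def
  have hL1' : (1 : ℝ) ≤ (L : ℝ) := by exact_mod_cast hL1
  have hd0 : 0 ≤ d := by simp [hd_def]; linarith
  have hnum0 : (0:ℝ) ≤ (L : ℝ) - 1 := by linarith
  set t : ℝ := ((L : ℝ) - 1) / d with ht_def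
  have ht0 : 0 ≤ t := div_nonneg hnum0 hd0
  have ht1 : t ≤ 1 := by
    rcases eq_or_lt_of_le hd0 with h | h
    · simp [ht_def, ← h]
    · rw [ht_def, div_le_one h]; simp [hd_def]; linarith
  have htd : t * d = (L : ℝ) - 1 := by
    rcases eq_or_lt_of_le hd0 with h | h
    · have hzL : z e' = (L : ℝ) := by simp [hd_def] at h; linarith
      have : (L : ℝ) = 1 := le_antisymm (by rw [← hzL]; exact hze'1) hL1'
      simp [← h, this]
    · rw [ht_def, div_mul_cancel₀ _ (ne_of_gt h)]
  have hsum_erase : ∑ e ∈ EZ.erase e', z e = d := by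
    have := Finset.add_sum_erase EZ z he'
    rw [hzsum] at this; linarith
  refine ⟨fun e => if e = e' then 1 else t * z e, by simp, ?_, ?_⟩
  · show (∑ e ∈ EZ.erase e', (if e = e' then (1:ℝ) else t * z e)) = (L:ℝ) - 1
    rw [Finset.sum_congr rfl (fun e he => if_neg (Finset.ne_of_mem_erase he)),
      ← Finset.mul_sum, hsum_erase, htd]
  refine ⟨hx0, ?_, hy0, hxE, ?_, hyE, hxsum, hxU, ?_, ?_, ?_, hysum, hyU⟩
  · intro e
    by_cases h : e = e' <;> simp [h]
    exact mul_nonneg ht0 (hz0 e)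
  · intro e he
    have hne : e ≠ e' := fun h => he (h ▸ he')
    have h0 : z e = 0 := hzE e he
    simp [hne, h0]
  · intro e he
    by_cases h : e = e'
    · subst h; simp [hxe']
    · simp only [if_neg h]
      calc t * z e ≤ 1 * z e := mul_le_mul_of_nonneg_right ht1 (hz0 e)
        _ = z e := one_mul _
        _ ≤ x e := hzx e he
  · show (∑ e ∈ EZ, (if e = e' then (1:ℝ) else t * z e)) = (L:ℝ)
    rw [← Finset.add_sum_erase EZ _ he', if_pos rfl,
      Finset.sum_congr rfl (fun e he => if_neg (Finset.ne_of_mem_erase he)),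
      ← Finset.mul_sum, hsum_erase, htd]
    ring
  · intro e he
    by_cases h : e = e'
    · subst h; simp [hye']
    · simp only [if_neg h]
      calc t * z e ≤ 1 * z e := mul_le_mul_of_nonneg_right ht1 (hz0 e)
        _ = z e := one_mul _
        _ ≤ y e := hzy e he
end
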